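/- Let Z ~ N(0,1) and W_μ ~ N(μ,1) be independent, and let Λ_μ = Z² + (1/2)(1 − sgn(W_μ))·W_μ². As μ → ∞, Λ_μ converges in distribution to the chi-squared distribution with 1 degree of freedom. -/

import Mathlib

/-!
`Λ_μ` coincides with `Z²` outside the event `{W_μ < 0}`, whose probability `Φ(-μ)` tends to `0`;
hence for bounded `f` the expectations of `f(Λ_μ)` and `f(Z²)` differ by at most `2‖f‖Φ(-μ)`.
It remains that `Z²` has law `χ²₁`, which is the substitution `x = √y` in the Gaussian density.
-/

open MeasureTheory ProbabilityTheory Real Filter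

/-- The chi-squared distribution with `k` degrees of freedom. -/
noncomputable def chiSq (k : ℝ) : Measure ℝ := gammaMeasure (k / 2) (1 / 2)

open Set Topology
open scoped NNReal BoundedContinuousFunction

lemma Real.measurable_sign : Measurable Real.sign := by
  unfold Real.sign
  exact Measurable.ite measurableSet_Iio measurable_const
    (Measurable.ite measurableSet_Ioi measurable_const measurable_const)

lemma Real.one_sub_sign_mul_sq_of_nonneg {w : ℝ} (hw : 0 ≤ w) :
    (1 - Real.sign w) * w ^ 2 = 0 := by
  rcases hw.lt_or_eq with hw | rfl
  · simp [Real.sign_of_pos hw]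
  · simp

lemma integral_gammaMeasure_eq_integral_smul {E : Type*} [NormedAddCommGroup E]
    [NormedSpace ℝ E] {a r : ℝ} (ha : 0 < a) (hr : 0 < r) (f : ℝ → E) :
    ∫ x, f x ∂(gammaMeasure a r) = ∫ x, gammaPDFReal a r x • f x := by
  rw [gammaMeasure, integral_withDensity_eq_integral_toReal_smul (f := gammaPDF a r)
    (measurable_gammaPDFReal a r).ennreal_ofReal (ae_of_all _ fun _ ↦ ENNReal.ofReal_lt_top)]
  simp_rw [gammaPDF, ENNReal.toReal_ofReal (gammaPDFReal_nonneg ha hr _)]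

lemma gammaPDFReal_half_half {x : ℝ} (hx : 0 < x) :
    gammaPDFReal (1 / 2) (1 / 2) x =
      x ^ ((1 / 2 : ℝ) - 1) * gaussianPDFReal 0 1 (x ^ (1 / 2 : ℝ)) := by
  have hsq : (x ^ (1 / 2 : ℝ)) ^ 2 = x := by
    rw [← Real.sqrt_eq_rpow, Real.sq_sqrt hx.le]
  have hconst : (1 / 2 : ℝ) ^ (1 / 2 : ℝ) / Gamma (1 / 2) = (√(2 * π))⁻¹ := by
    rw [← Real.sqrt_eq_rpow, Gamma_one_half_eq, one_div, Real.sqrt_inv,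
      Real.sqrt_mul zero_le_two, mul_inv, div_eq_mul_inv]
  simp only [gammaPDFReal, if_pos hx.le, hconst, gaussianPDFReal, NNReal.coe_one, mul_one,
    sub_zero, hsq]
  ring_nf

theorem integral_comp_sq_gaussianReal (f : ℝ → ℝ) :
    ∫ x, f (x ^ 2) ∂gaussianReal 0 1 = ∫ x, f x ∂chiSq 1 := by
  rw [integral_gaussianReal_eq_integral_smul one_ne_zero, chiSq,
    integral_gammaMeasure_eq_integral_smul (by norm_num) (by norm_num)]
  set G : ℝ → ℝ := fun x ↦ gaussianPDFReal 0 1 x * f (x ^ 2)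
  have hG : ∀ x, G |x| = gaussianPDFReal 0 1 x • f (x ^ 2) := by
    simp [G, gaussianPDFReal]
  calc ∫ x, gaussianPDFReal 0 1 x • f (x ^ 2)
      = 2 * ∫ x in Ioi 0, G x := by simp_rw [← hG]; exact integral_comp_abs
    _ = 2 * ∫ x in Ioi 0, (|1 / 2| * x ^ ((1 / 2 : ℝ) - 1)) • G (x ^ (1 / 2 : ℝ)) := by
        rw [integral_comp_rpow_Ioi G (by norm_num : (1 / 2 : ℝ) ≠ 0)]
    _ = ∫ x in Ioi 0, gammaPDFReal (1 / 2) (1 / 2) x • f x := by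
        rw [← integral_const_mul]
        refine setIntegral_congr_fun measurableSet_Ioi fun x (hx : 0 < x) ↦ ?_
        have hsq : (x ^ (1 / 2 : ℝ)) ^ 2 = x := by
          rw [← Real.sqrt_eq_rpow, Real.sq_sqrt hx.le]
        simp only [G, hsq, gammaPDFReal_half_half hx, smul_eq_mul]
        rw [abs_of_pos (by norm_num : (0 : ℝ) < 1 / 2)]
        ring
    _ = ∫ x, gammaPDFReal (1 / 2) (1 / 2) x • f x := by
        refine setIntegral_eq_integral_of_forall_compl_eq_zero fun x (hx : ¬ 0 < x) ↦ ?_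
        rcases (not_lt.1 hx).lt_or_eq with hx | rfl
        · simp [gammaPDFReal, not_le.2 hx]
        · rw [gammaPDFReal, if_pos le_rfl, Real.zero_rpow (by norm_num), mul_zero, zero_mul,
            zero_smul]

lemma norm_integral_comp_sub_comp_le {Ω X E : Type*} [MeasurableSpace Ω] {μ : Measure Ω}
    [IsFiniteMeasure μ] [TopologicalSpace X] [NormedAddCommGroup E] [NormedSpace ℝ E]
    (f : X →ᵇ E) {g h : Ω → X} (hg : AEStronglyMeasurable g μ) (hh : AEStronglyMeasurable h μ)
    {s : Set Ω} (hgh : ∀ ω ∉ s, g ω = h ω) :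
    ‖∫ ω, f (g ω) ∂μ - ∫ ω, f (h ω) ∂μ‖ ≤ 2 * ‖f‖ * μ.real s := by
  have hint : ∀ {k : Ω → X}, AEStronglyMeasurable k μ → Integrable (fun ω ↦ f (k ω)) μ :=
    fun hk ↦ .of_bound (f.continuous.comp_aestronglyMeasurable hk) ‖f‖
      (ae_of_all _ fun _ ↦ f.norm_coe_le_norm _)
  have hpt : ∀ ω, ‖f (g ω) - f (h ω)‖ ≤ (toMeasurable μ s).indicator (fun _ ↦ 2 * ‖f‖) ω := by
    intro ω
    by_cases hω : ω ∈ toMeasurable μ s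
    · rw [indicator_of_mem hω, two_mul]
      exact norm_sub_le_of_le (f.norm_coe_le_norm _) (f.norm_coe_le_norm _)
    · rw [indicator_of_notMem hω, hgh ω fun hs ↦ hω (subset_toMeasurable μ s hs), sub_self,
        norm_zero]
  rw [← integral_sub (hint hg) (hint hh)]
  refine (norm_integral_le_of_norm_le ((integrable_const _).indicator
    (measurableSet_toMeasurable μ s)) (ae_of_all _ hpt)).trans_eq ?_
  rw [integral_indicator_const _ (measurableSet_toMeasurable μ s), smul_eq_mul,
    measureReal_def, measure_toMeasurable, ← measureReal_def, mul_comm]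

lemma tendsto_gaussianReal_real_Iio_zero (v : ℝ≥0) :
    Tendsto (fun m ↦ (gaussianReal m v).real (Iio 0)) atTop (𝓝 0) := by
  have hshift : ∀ m, (gaussianReal m v).real (Iio 0) = (gaussianReal 0 v).real (Iio (-m)) := by
    intro m
    rw [← zero_add m, ← gaussianReal_map_add_const, map_measureReal_apply (measurable_add_const m)
      measurableSet_Iio]
    congr 1
    ext x
    simp [lt_neg_iff_add_neg]
  have hcdf : Tendsto (fun m ↦ cdf (gaussianReal 0 v) (-m)) atTop (𝓝 0) :=
    (tendsto_cdf_atBot _).comp tendsto_neg_atTop_atBot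
  refine squeeze_zero (fun _ ↦ measureReal_nonneg) (fun m ↦ ?_) hcdf
  rw [hshift, cdf_eq_real]
  exact measureReal_mono Iio_subset_Iic_self

theorem stmt_7_general {Ω : Type*} [MeasureSpace Ω] [IsProbabilityMeasure (ℙ : Measure Ω)]
    (Z : Ω → ℝ) (W : ℝ → Ω → ℝ)
    (hZ : Measure.map Z ℙ = gaussianReal 0 1)
    (hW : ∀ μ : ℝ, Measure.map (W μ) ℙ = gaussianReal μ 1) :
    ∀ f : BoundedContinuousFunction ℝ ℝ,
      Tendsto (fun μ : ℝ =>
          ∫ ω, f (Z ω ^ 2 + (1 / 2) * (1 - Real.sign (W μ ω)) * (W μ ω) ^ 2) ∂ℙ)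
        atTop (nhds (∫ x, f x ∂(chiSq 1))) := by
  intro f
  have hZm : AEMeasurable Z ℙ := .of_map_ne_zero (hZ ▸ IsProbabilityMeasure.ne_zero _)
  have hWm (μ : ℝ) : AEMeasurable (W μ) ℙ :=
    .of_map_ne_zero (hW μ ▸ IsProbabilityMeasure.ne_zero _)
  have hlim : ∫ ω, f (Z ω ^ 2) ∂ℙ = ∫ x, f x ∂chiSq 1 := by
    rw [← integral_comp_sq_gaussianReal, ← hZ,
      integral_map hZm (by fun_prop : Continuous fun x : ℝ ↦ f (x ^ 2)).aestronglyMeasurable]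
  have hdist (μ : ℝ) :
      dist (∫ ω, f (Z ω ^ 2 + (1 / 2) * (1 - Real.sign (W μ ω)) * (W μ ω) ^ 2) ∂ℙ)
        (∫ ω, f (Z ω ^ 2) ∂ℙ) ≤ 2 * ‖f‖ * (gaussianReal μ 1).real (Iio 0) := by
    rw [dist_eq_norm, ← hW μ, map_measureReal_apply_of_aemeasurable (hWm μ) measurableSet_Iio]
    refine norm_integral_comp_sub_comp_le f ?_ (hZm.pow_const 2).aestronglyMeasurable
      fun ω (hω : ¬ W μ ω < 0) ↦ ?_
    · exact ((hZm.pow_const 2).add (((aemeasurable_const.sub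
        (Real.measurable_sign.comp_aemeasurable (hWm μ))).const_mul _).mul
          ((hWm μ).pow_const 2))).aestronglyMeasurable
    · rw [mul_assoc, Real.one_sub_sign_mul_sq_of_nonneg (not_lt.1 hω), mul_zero, add_zero]
  rw [← hlim, tendsto_iff_dist_tendsto_zero]
  refine squeeze_zero (fun _ ↦ dist_nonneg) hdist ?_
  simpa using (tendsto_gaussianReal_real_Iio_zero 1).const_mul (2 * ‖f‖)

/-- As `μ → ∞`, `Λ_μ = Z² + (1/2)(1 − sgn W_μ) W_μ²` converges in distribution to `χ²₁`:
integrals of every bounded continuous function converge. -/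
theorem stmt_7 {Ω : Type*} [MeasureSpace Ω] [IsProbabilityMeasure (ℙ : Measure Ω)]
    (Z : Ω → ℝ) (W : ℝ → Ω → ℝ)
    (hZ : Measure.map Z ℙ = gaussianReal 0 1)
    (hW : ∀ μ : ℝ, Measure.map (W μ) ℙ = gaussianReal μ 1)
    (hZW : ∀ μ : ℝ, IndepFun Z (W μ) ℙ) :
    ∀ f : BoundedContinuousFunction ℝ ℝ,
      Tendsto (fun μ : ℝ =>
          ∫ ω, f (Z ω ^ 2 + (1 / 2) * (1 - Real.sign (W μ ω)) * (W μ ω) ^ 2) ∂ℙ)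
        atTop (nhds (∫ x, f x ∂(chiSq 1))) :=
  stmt_7_general Z W hZ hW
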